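/- arXiv:2201.02957 — 3 statements merged into one kernel-verified Lean document; each statement's English description precedes it below -/
import Mathlib

section
/- Let K be a field and let R⁽¹⁾, R⁽²⁾ be ℕ-graded K-algebras (with degree-0 part K). If x is a degree-1 non-zerodivisor of R⁽¹⁾ and y is a degree-1 non-zerodivisor of R⁽²⁾, then x⊗y is a degree-1 non-zerodivisor of the Segre product R⁽¹⁾ # R⁽²⁾ = ⊕_{n≥0} R⁽¹⁾_n ⊗_K R⁽²⁾_n. -/
open scoped TensorProduct

/-- The Segre product `R⁽¹⁾ # R⁽²⁾ = ⊕ₙ Rₙ⁽¹⁾ ⊗ Rₙ⁽²⁾`, realized as a submodule of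
`A ⊗[K] B`. -/
noncomputable def segreSubmodule {K A B : Type*} [CommRing K] [CommRing A] [Algebra K A]
    [CommRing B] [Algebra K B] (𝒜 : ℕ → Submodule K A) (ℬ : ℕ → Submodule K B) :
    Submodule K (A ⊗[K] B) :=
  ⨆ n : ℕ, Submodule.span K {z : A ⊗[K] B | ∃ a ∈ 𝒜 n, ∃ b ∈ ℬ n, z = a ⊗ₜ[K] b}

/-- If `x` is a degree-one non-zerodivisor of `R⁽¹⁾` and `y` a degree-one non-zerodivisor
of `R⁽²⁾`, then `x ⊗ y` is a degree-one non-zerodivisor of the Segre product. -/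
theorem stmt7 {K A B : Type*} [Field K] [CommRing A] [Algebra K A]
    [CommRing B] [Algebra K B]
    (𝒜 : ℕ → Submodule K A) (ℬ : ℕ → Submodule K B)
    [GradedAlgebra 𝒜] [GradedAlgebra ℬ]
    (x : A) (y : B) (hx : x ∈ 𝒜 1) (hy : y ∈ ℬ 1)
    (hxreg : ∀ a : A, x * a = 0 → a = 0) (hyreg : ∀ b : B, y * b = 0 → b = 0) :
    (x ⊗ₜ[K] y ∈ Submodule.span K {z : A ⊗[K] B | ∃ a ∈ 𝒜 1, ∃ b ∈ ℬ 1, z = a ⊗ₜ[K] b}) ∧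
      ∀ z ∈ segreSubmodule 𝒜 ℬ, (x ⊗ₜ[K] y) * z = 0 → z = 0 := by
  constructor
  · exact Submodule.subset_span ⟨x, hx, y, hy, rfl⟩
  · intro z _ hz
    have hmap : ∀ w : A ⊗[K] B, (x ⊗ₜ[K] y) * w =
        TensorProduct.map (LinearMap.mulLeft K x) (LinearMap.mulLeft K y) w := by
      intro w
      induction w using TensorProduct.induction_on with
      | zero => simp
      | tmul a b => simp [Algebra.TensorProduct.tmul_mul_tmul]
      | add u v hu hv => rw [mul_add, map_add, hu, hv]
    have hinj : Function.Injective
        (TensorProduct.map (LinearMap.mulLeft K x) (LinearMap.mulLeft K y)) := by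
      have h1 : Function.Injective (LinearMap.mulLeft K x) := fun a b h =>
        sub_eq_zero.mp (hxreg _ (by
          simp only [LinearMap.mulLeft_apply] at h
          rw [mul_sub, h, sub_self]))
      have h2 : Function.Injective (LinearMap.mulLeft K y) := fun a b h =>
        sub_eq_zero.mp (hyreg _ (by
          simp only [LinearMap.mulLeft_apply] at h
          rw [mul_sub, h, sub_self]))
      rw [← LinearMap.lTensor_comp_rTensor]
      exact (Module.Flat.lTensor_preserves_injective_linearMap _ h2).comp
        (Module.Flat.rTensor_preserves_injective_linearMap _ h1)
    have := hinj (a₁ := z) (a₂ := 0) (by rw [← hmap, hz, map_zero])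
    exact this
end

section
/- Let G = (V,E) be a finite simple graph and G′ a connected component of G. If G′ has two maximal cliques of different sizes, then there exist maximal cliques K₁ and K₂ in G′ with #K₁ ≠ #K₂ and K₁ ∩ K₂ ≠ ∅. -/
/-- A maximal clique of a graph. -/
def IsMaxClique {V : Type*} (G : SimpleGraph V) (K : Finset V) : Prop :=
  G.IsClique ↑K ∧ ∀ K' : Finset V, G.IsClique ↑K' → K ⊆ K' → K = K'

lemma exists_maxclique {V : Type*} [Fintype V] [DecidableEq V] (G : SimpleGraph V) :
    ∀ (S : Finset V), G.IsClique ↑S → ∃ M : Finset V, IsMaxClique G M ∧ S ⊆ M := by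
  classical
  have key : ∀ (n : ℕ) (S : Finset V), Fintype.card V - S.card ≤ n → G.IsClique ↑S →
      ∃ M : Finset V, IsMaxClique G M ∧ S ⊆ M := by
    intro n
    induction n with
    | zero =>
      intro S hn hS
      refine ⟨S, ⟨hS, ?_⟩, subset_refl S⟩
      intro K' hK' hsub
      have : S.card = Fintype.card V := le_antisymm (Finset.card_le_univ S)
        (by omega)
      exact Finset.eq_of_subset_of_card_le hsub (by
        have := Finset.card_le_univ K'; omega)
    | succ n ih =>
      intro S hn hS
      by_cases h : ∀ K' : Finset V, G.IsClique ↑K' → S ⊆ K' → S = K'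
      · exact ⟨S, ⟨hS, h⟩, subset_refl S⟩
      · push_neg at h
        obtain ⟨K', hK', hsub, hne⟩ := h
        have hlt : S.card < K'.card := Finset.card_lt_card (hsub.ssubset_of_ne hne)
        have := Finset.card_le_univ K'
        exact (ih K' (by omega) hK').imp (fun M ⟨hM, hs⟩ => ⟨hM, hsub.trans hs⟩)
  intro S hS
  exact key _ S le_rfl hS

lemma clique_comp {V : Type*} (G : SimpleGraph V) (c : G.ConnectedComponent)
    {M : Finset V} (hM : G.IsClique ↑M) {x : V} (hx : x ∈ M)
    (hxc : G.connectedComponentMk x = c) : ∀ z ∈ M, G.connectedComponentMk z = c := by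
  intro z hz
  rcases eq_or_ne z x with rfl | hne
  · exact hxc
  · have hadj : G.Adj x z := hM (by simpa using hx) (by simpa using hz) (Ne.symm hne)
    rw [← hxc]
    exact SimpleGraph.ConnectedComponent.sound hadj.symm.reachable

lemma walk_aux {V : Type*} [Fintype V] [DecidableEq V] (G : SimpleGraph V)
    (c : G.ConnectedComponent) :
    ∀ {x y : V} (_ : G.Walk x y) (K₁ K₂ : Finset V), IsMaxClique G K₁ → IsMaxClique G K₂ →
      x ∈ K₁ → y ∈ K₂ →
      (∀ z ∈ K₁, G.connectedComponentMk z = c) →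
      (∀ z ∈ K₂, G.connectedComponentMk z = c) →
      K₁.card ≠ K₂.card →
      ∃ A B : Finset V, IsMaxClique G A ∧ IsMaxClique G B ∧
        (∀ z ∈ A, G.connectedComponentMk z = c) ∧
        (∀ z ∈ B, G.connectedComponentMk z = c) ∧
        A.card ≠ B.card ∧ (A ∩ B).Nonempty := by
  intro x y p
  induction p with
  | nil =>
    intro K₁ K₂ h1 h2 hx hy hc1 hc2 hcard
    exact ⟨K₁, K₂, h1, h2, hc1, hc2, hcard, ⟨_, Finset.mem_inter.mpr ⟨hx, hy⟩⟩⟩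
  | @cons u v w hadj p ih =>
    intro K₁ K₂ h1 h2 hx hy hc1 hc2 hcard
    have hclq : G.IsClique ↑({u, v} : Finset V) := by
      rw [Finset.coe_insert, Finset.coe_singleton]
      exact SimpleGraph.isClique_pair.mpr fun _ => hadj
    obtain ⟨M, hM, hsub⟩ := exists_maxclique G {u, v} hclq
    have huM : u ∈ M := hsub (by simp)
    have hvM : v ∈ M := hsub (by simp)
    have hMc : ∀ z ∈ M, G.connectedComponentMk z = c :=
      clique_comp G c hM.1 huM (hc1 u hx)
    by_cases hMe : M.card = K₁.card
    · exact ih M K₂ hM h2 hvM hy hMc hc2 (hMe ▸ hcard)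
    · exact ⟨K₁, M, h1, hM, hc1, hMc, fun h => hMe h.symm,
        ⟨u, Finset.mem_inter.mpr ⟨hx, huM⟩⟩⟩

/-- If a connected component of a finite graph contains two maximal cliques of different
sizes, then it contains two maximal cliques of different sizes with nonempty
intersection. -/
theorem stmt10 {V : Type*} [Fintype V] [DecidableEq V] (G : SimpleGraph V)
    (c : G.ConnectedComponent)
    (K L : Finset V) (hK : IsMaxClique G K) (hL : IsMaxClique G L)
    (hKc : ∀ x ∈ K, G.connectedComponentMk x = c)
    (hLc : ∀ x ∈ L, G.connectedComponentMk x = c)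
    (hcard : K.card ≠ L.card) :
    ∃ K₁ K₂ : Finset V, IsMaxClique G K₁ ∧ IsMaxClique G K₂ ∧
      (∀ x ∈ K₁, G.connectedComponentMk x = c) ∧
      (∀ x ∈ K₂, G.connectedComponentMk x = c) ∧
      K₁.card ≠ K₂.card ∧ (K₁ ∩ K₂).Nonempty := by
  classical
  obtain ⟨x, hx⟩ : K.Nonempty := by
    rw [Finset.nonempty_iff_ne_empty]
    rintro rfl
    exact hcard ((hK.2 L hL.1 (Finset.empty_subset L)) ▸ rfl)
  obtain ⟨y, hy⟩ : L.Nonempty := by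
    rw [Finset.nonempty_iff_ne_empty]
    rintro rfl
    exact hcard ((hL.2 K hK.1 (Finset.empty_subset K)).symm ▸ rfl)
  have hreach : G.Reachable x y := by
    have := (hKc x hx).trans (hLc y hy).symm
    exact SimpleGraph.ConnectedComponent.exact this
  obtain ⟨p⟩ := hreach
  exact walk_aux G c p K L hK hL hx hy hKc hLc hcard
end

section
/- Let G = (V,E) be a finite simple graph and G′ a connected component of G. Let 𝒦(G′) be the set of cliques of G′ of size at most 3. If not all maximal elements of 𝒦(G′) have the same size, then there exist maximal elements K₁, K₂ of 𝒦(G′) with #K₁ ≠ #K₂ and K₁ ∩ K₂ ≠ ∅. -/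
/-- A maximal element of `𝒦(G′)`, the set of cliques of size at most 3 contained in the
vertex set `W` of the connected component `G′`. -/
def IsMaxK3 {V : Type*} (G : SimpleGraph V) (W : Set V) (K : Finset V) : Prop :=
  G.IsClique ↑K ∧ K.card ≤ 3 ∧ ↑K ⊆ W ∧
    ∀ K' : Finset V, G.IsClique ↑K' → K'.card ≤ 3 → ↑K' ⊆ W → K ⊆ K' → K = K'

lemma extend_to_max {V : Type*} [Fintype V] [DecidableEq V] (G : SimpleGraph V)
    (W : Set V) (S : Finset V) (h1 : G.IsClique ↑S) (h2 : S.card ≤ 3) (h3 : ↑S ⊆ W) :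
    ∃ M, IsMaxK3 G W M ∧ S ⊆ M := by
  classical
  set 𝒮 : Finset (Finset V) :=
    Finset.univ.filter (fun T => G.IsClique ↑T ∧ T.card ≤ 3 ∧ ↑T ⊆ W ∧ S ⊆ T) with h𝒮
  have hS : S ∈ 𝒮 := by simp [h𝒮, h1, h2, h3]
  obtain ⟨M, hM, hmax⟩ := 𝒮.exists_max_image Finset.card ⟨S, hS⟩
  simp only [h𝒮, Finset.mem_filter, Finset.mem_univ, true_and] at hM hmax
  refine ⟨M, ⟨hM.1, hM.2.1, hM.2.2.1, ?_⟩, hM.2.2.2⟩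
  intro K' c1 c2 c3 c4
  exact Finset.eq_of_subset_of_card_le c4 (hmax K' ⟨c1, c2, c3, hM.2.2.2.trans c4⟩)

lemma key {V : Type*} [Fintype V] [DecidableEq V] (G : SimpleGraph V)
    (c : G.ConnectedComponent) :
    ∀ n : ℕ, ∀ K L : Finset V, IsMaxK3 G {x | G.connectedComponentMk x = c} K →
      IsMaxK3 G {x | G.connectedComponentMk x = c} L → K.card ≠ L.card →
      ∀ u ∈ K, ∀ v ∈ L, G.dist u v ≤ n →
    ∃ K₁ K₂ : Finset V,
      IsMaxK3 G {x | G.connectedComponentMk x = c} K₁ ∧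
      IsMaxK3 G {x | G.connectedComponentMk x = c} K₂ ∧
      K₁.card ≠ K₂.card ∧ (K₁ ∩ K₂).Nonempty := by
  intro n
  induction n with
  | zero =>
    intro K L hK hL hcard u hu v hv hd
    have hr : G.Reachable u v := SimpleGraph.ConnectedComponent.exact <| by
      have h1 := hK.2.2.1 hu; have h2 := hL.2.2.1 hv
      simp only [Set.mem_setOf_eq] at h1 h2; rw [h1, h2]
    have : u = v := by
      have := Nat.le_zero.mp hd
      exact (SimpleGraph.Reachable.dist_eq_zero_iff hr).mp this
    exact ⟨K, L, hK, hL, hcard, ⟨u, Finset.mem_inter.mpr ⟨hu, this ▸ hv⟩⟩⟩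
  | succ n ih =>
    intro K L hK hL hcard u hu v hv hd
    by_cases huv : u = v
    · exact ⟨K, L, hK, hL, hcard, ⟨u, Finset.mem_inter.mpr ⟨hu, huv ▸ hv⟩⟩⟩
    have hr : G.Reachable u v := SimpleGraph.ConnectedComponent.exact <| by
      have h1 := hK.2.2.1 hu; have h2 := hL.2.2.1 hv
      simp only [Set.mem_setOf_eq] at h1 h2; rw [h1, h2]
    obtain ⟨p, hp⟩ := hr.exists_walk_length_eq_dist
    cases p with
    | nil => exact absurd rfl huv
    | @cons _ b _ hadj q =>
      have hqd : G.dist b v ≤ n := by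
        have h1 : G.dist b v ≤ q.length := SimpleGraph.dist_le q
        have h2 : q.length + 1 ≤ n + 1 := by
          rw [show q.length + 1 = (SimpleGraph.Walk.cons hadj q).length from rfl, hp]
          exact hd
        omega
      have hub : u ≠ b := hadj.ne
      have hclique : G.IsClique ↑({u, b} : Finset V) := by
        simp only [Finset.coe_insert, Finset.coe_singleton]
        exact SimpleGraph.isClique_pair.mpr (fun _ => hadj)
      have hcard2 : ({u, b} : Finset V).card ≤ 3 := by
        apply le_trans (Finset.card_insert_le _ _); simp
      have hbW : ↑({u, b} : Finset V) ⊆ {x | G.connectedComponentMk x = c} := by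
        intro x hx
        simp only [Finset.coe_insert, Finset.coe_singleton, Set.mem_insert_iff,
          Set.mem_singleton_iff] at hx
        have huW := hK.2.2.1 hu
        rcases hx with rfl | rfl
        · exact huW
        · simp only [Set.mem_setOf_eq] at huW ⊢
          rw [SimpleGraph.ConnectedComponent.sound hadj.symm.reachable]
          exact huW
      obtain ⟨M, hM, hSM⟩ := extend_to_max G _ _ hclique hcard2 hbW
      have huM : u ∈ M := hSM (by simp)
      have hbM : b ∈ M := hSM (by simp)
      by_cases hMK : M.card = K.card
      · exact ih M L hM hL (hMK ▸ hcard) b hbM v hv hqd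
      · exact ⟨K, M, hK, hM, fun h => hMK h.symm, ⟨u, Finset.mem_inter.mpr ⟨hu, huM⟩⟩⟩

/-- If a connected component of a finite graph has two maximal elements of `𝒦` of
different sizes, then it has two maximal elements of `𝒦` of different sizes with
nonempty intersection. -/
theorem stmt11 {V : Type*} [Fintype V] [DecidableEq V] (G : SimpleGraph V)
    (c : G.ConnectedComponent)
    (K L : Finset V)
    (hK : IsMaxK3 G {x | G.connectedComponentMk x = c} K)
    (hL : IsMaxK3 G {x | G.connectedComponentMk x = c} L)
    (hcard : K.card ≠ L.card) :
    ∃ K₁ K₂ : Finset V,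
      IsMaxK3 G {x | G.connectedComponentMk x = c} K₁ ∧
      IsMaxK3 G {x | G.connectedComponentMk x = c} K₂ ∧
      K₁.card ≠ K₂.card ∧ (K₁ ∩ K₂).Nonempty := by
  -- K and L are nonempty
  have hne : ∀ A B : Finset V, IsMaxK3 G {x | G.connectedComponentMk x = c} A →
      IsMaxK3 G {x | G.connectedComponentMk x = c} B → B.Nonempty → A.Nonempty := by
    intro A B hA hB ⟨b, hb⟩
    by_contra h
    rw [Finset.not_nonempty_iff_eq_empty] at h
    subst h
    have := hA.2.2.2 {b} (by simp [SimpleGraph.isClique_iff, Set.Pairwise])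
      (by simp) (by
        intro x hx
        simp only [Finset.coe_singleton, Set.mem_singleton_iff] at hx
        subst hx
        exact hB.2.2.1 hb) (Finset.empty_subset _)
    exact (Finset.singleton_ne_empty b) this.symm
  have hKL : K.Nonempty ∨ L.Nonempty := by
    by_contra h
    push_neg at h
    obtain ⟨h1, h2⟩ := h
    exact hcard (by rw [h1, h2])
  have hKne : K.Nonempty := hKL.elim id (hne K L hK hL)
  have hLne : L.Nonempty := hne L K hL hK hKne
  obtain ⟨u, hu⟩ := hKne
  obtain ⟨v, hv⟩ := hLne
  exact key G c (G.dist u v) K L hK hL hcard u hu v hv le_rfl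
end
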